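/- Fix c₀ ≠ 0, ε ∈ {−1, 1}, and a continuous function 𝔥 : [−1, 1] → ℝ. A point (x₀, y₀) ∈ Θ_ε = (0, ∞) × (−1, 1) satisfies Φ(x₀, y₀) = (0, 0) if and only if y₀ = 0 and 2ε𝔥(0)x₀ = 1. In particular, the system has an equilibrium in Θ_ε if and only if ε𝔥(0) > 0, in which case the equilibrium is unique and equals e₀ = (1/(2ε𝔥(0)), 0). -/

import Mathlib

/-- The vector field of the helicoidal prescribed mean curvature ODE system
`(x, y)' = Φ(x, y)`. -/
noncomputable def helicoidalField (c₀ ε : ℝ) (𝔥 : ℝ → ℝ) (p : ℝ × ℝ) : ℝ × ℝ :=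
  (p.2,
    ((1 - p.2 ^ 2) * (p.1 ^ 2 + 2 * c₀ ^ 2 * p.2 ^ 2)
        - 2 * ε * 𝔥 (p.1 * p.2 / Real.sqrt (c₀ ^ 2 * p.2 ^ 2 + p.1 ^ 2))
          * Real.sqrt (1 - p.2 ^ 2) * (c₀ ^ 2 * p.2 ^ 2 + p.1 ^ 2) ^ ((3 : ℝ) / 2))
      / (p.1 ^ 3 + c₀ ^ 2 * p.1))

/-! The first component of `Φ` is `y`, so every equilibrium lies on the axis `y = 0`. There both
square roots and the power `3/2` collapse, and the second component of `Φ` becomes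
`x (1 - 2ε𝔥(0)x) / (x² + c₀²)`, which for `x > 0` vanishes exactly when `2ε𝔥(0)x = 1`. -/

section

variable (c₀ ε : ℝ) (𝔥 : ℝ → ℝ)

theorem helicoidalField_of_snd_eq_zero {x : ℝ} (hx : 0 < x) :
    helicoidalField c₀ ε 𝔥 (x, 0) = (0, x * (1 - 2 * ε * 𝔥 0 * x) / (x ^ 2 + c₀ ^ 2)) := by
  have hsqrt : Real.sqrt (c₀ ^ 2 * 0 ^ 2 + x ^ 2) = x := by
    rw [zero_pow two_ne_zero, mul_zero, zero_add, Real.sqrt_sq hx.le]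
  have hrpow : (c₀ ^ 2 * 0 ^ 2 + x ^ 2) ^ ((3 : ℝ) / 2) = x ^ 3 := by
    rw [zero_pow two_ne_zero, mul_zero, zero_add, ← Real.rpow_natCast x 2,
      ← Real.rpow_mul hx.le, ← Real.rpow_natCast x 3]
    norm_num
  simp only [helicoidalField, hsqrt, hrpow, mul_zero, zero_div]
  congr 1
  field_simp
  ring

theorem helicoidalField_eq_zero_iff {x : ℝ} (hx : 0 < x) (y : ℝ) :
    helicoidalField c₀ ε 𝔥 (x, y) = (0, 0) ↔ y = 0 ∧ 2 * ε * 𝔥 0 * x = 1 := by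
  constructor
  · intro h
    obtain rfl : y = 0 := congrArg Prod.fst h
    rw [helicoidalField_of_snd_eq_zero c₀ ε 𝔥 hx, Prod.mk.injEq, div_eq_zero_iff,
      mul_eq_zero, sub_eq_zero] at h
    refine ⟨rfl, ?_⟩
    rcases h with ⟨-, (hx0 | h) | hden⟩
    · exact absurd hx0 hx.ne'
    · exact h.symm
    · exact absurd hden (by positivity)
  · rintro ⟨rfl, h⟩
    rw [helicoidalField_of_snd_eq_zero c₀ ε 𝔥 hx, h, sub_self, mul_zero, zero_div]

end

theorem helicoidal_equilibrium (c₀ ε : ℝ)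
    (𝔥 : ℝ → ℝ) :
    (∀ x₀ y₀ : ℝ, 0 < x₀ → y₀ ∈ Set.Ioo (-1 : ℝ) 1 →
      (helicoidalField c₀ ε 𝔥 (x₀, y₀) = (0, 0) ↔ y₀ = 0 ∧ 2 * ε * 𝔥 0 * x₀ = 1)) ∧
    ((∃ p ∈ (Set.Ioi (0 : ℝ)) ×ˢ (Set.Ioo (-1 : ℝ) 1),
        helicoidalField c₀ ε 𝔥 p = (0, 0)) ↔ 0 < ε * 𝔥 0) ∧
    (0 < ε * 𝔥 0 → ∀ p ∈ (Set.Ioi (0 : ℝ)) ×ˢ (Set.Ioo (-1 : ℝ) 1),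
      (helicoidalField c₀ ε 𝔥 p = (0, 0) ↔ p = (1 / (2 * ε * 𝔥 0), 0))) := by
  refine ⟨fun x₀ y₀ hx _ ↦ helicoidalField_eq_zero_iff c₀ ε 𝔥 hx y₀, ⟨?_, ?_⟩, ?_⟩
  · rintro ⟨⟨x, y⟩, ⟨hx : 0 < x, -⟩, hp⟩
    have h := ((helicoidalField_eq_zero_iff c₀ ε 𝔥 hx y).1 hp).2
    exact pos_of_mul_pos_left (b := 2 * x) (by linarith) (by positivity)
  · intro hpos
    have hx : 0 < 1 / (2 * ε * 𝔥 0) := one_div_pos.2 (by linarith)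
    refine ⟨(1 / (2 * ε * 𝔥 0), 0), ⟨hx, by norm_num⟩, ?_⟩
    rw [helicoidalField_eq_zero_iff c₀ ε 𝔥 hx]
    exact ⟨rfl, mul_one_div_cancel (by linarith)⟩
  · rintro hpos ⟨x, y⟩ ⟨hx : 0 < x, -⟩
    rw [helicoidalField_eq_zero_iff c₀ ε 𝔥 hx, Prod.mk.injEq, eq_div_iff (by linarith), mul_comm x]
    exact and_comm
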